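/- Let (S, (A_i)_{i=1}^m, H, P, (R_i)_{i=1}^m) be a tabular episodic Markov game with deterministic target policy π† and deterministic policy π⁻. Under the d-portion attack, for every agent i, every step h, every state s, and every Markov product policy π: Ṽ^{π†}_{i,h}(s) − Ṽ^{π}_{i,h}(s) = E[ ∑_{h'=h}^{H} (Δ^{†−}_{i,h'}(s_{h'})/(2m)) · ∑_{j=1}^{m} 1(a_{j,h'} ≠ π†_{j,h'}(s_{h'})) ], where the expectation is over trajectories of the post-attack game started at s_h = s with a_{h'} ∼ π_{h'}(·|s_{h'}) and s_{h'+1} ∼ P̃_{h'}(·|s_{h'}, a_{h'}). -/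
import Mathlib


open Finset

namespace MGAttack

variable {S : Type} [Fintype S] [DecidableEq S]
variable {m : ℕ} {A : Fin m → Type} [∀ i, Fintype (A i)] [∀ i, DecidableEq (A i)]

/-- `VA P f π n h s`: expected sum of `f` over `n` steps starting from step `h` in
state `s`, when joint actions are drawn from the joint pmf `π` and states evolve
according to `P`.  With `f` a mean-reward function this is the value function. -/
noncomputable def VA (P : ℕ → S → (∀ i, A i) → S → ℝ) (f : ℕ → S → (∀ i, A i) → ℝ)
    (π : ℕ → S → (∀ i, A i) → ℝ) : ℕ → ℕ → S → ℝ
  | 0, _, _ => 0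
  | n + 1, h, s => ∑ a, π h s a * (f h s a + ∑ s', P h s a s' * VA P f π n (h + 1) s')

/-- Value function `V^π_h(s)` for horizon `H` (steps `h, h+1, …, H`). -/
noncomputable def Vf (P : ℕ → S → (∀ i, A i) → S → ℝ) (R : ℕ → S → (∀ i, A i) → ℝ)
    (π : ℕ → S → (∀ i, A i) → ℝ) (H h : ℕ) (s : S) : ℝ :=
  VA P R π (H + 1 - h) h s

/-- Q-function `Q^π_h(s,a)` for horizon `H`. -/
noncomputable def Qf (P : ℕ → S → (∀ i, A i) → S → ℝ) (R : ℕ → S → (∀ i, A i) → ℝ)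
    (π : ℕ → S → (∀ i, A i) → ℝ) (H h : ℕ) (s : S) (a : ∀ i, A i) : ℝ :=
  R h s a + ∑ s', P h s a s' * VA P R π (H - h) (h + 1) s'

/-- Joint pmf of a Markov product policy. -/
noncomputable def jp (π : ∀ i : Fin m, ℕ → S → A i → ℝ) : ℕ → S → (∀ i, A i) → ℝ :=
  fun h s a => ∏ i, π i h s (a i)

/-- Joint action prescribed by a deterministic (product) policy. -/
def tgtJ (τ : ∀ i : Fin m, ℕ → S → A i) (h : ℕ) (s : S) : ∀ i, A i := fun i => τ i h s

/-- A deterministic policy viewed as a (point-mass) stochastic policy. -/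
noncomputable def detP (τ : ∀ i : Fin m, ℕ → S → A i) : ∀ i : Fin m, ℕ → S → A i → ℝ :=
  fun i h s b => if b = τ i h s then 1 else 0

/-- `P` is a transition kernel for the steps `1, …, H`. -/
def IsKernel (H : ℕ) (P : ℕ → S → (∀ i, A i) → S → ℝ) : Prop :=
  ∀ h ∈ Finset.Icc 1 H, ∀ s a, (∀ s', 0 ≤ P h s a s') ∧ ∑ s', P h s a s' = 1

/-- `π` is a Markov product policy for the steps `1, …, H`. -/
def IsPolicy (H : ℕ) (π : ∀ i : Fin m, ℕ → S → A i → ℝ) : Prop :=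
  ∀ i : Fin m, ∀ h ∈ Finset.Icc 1 H, ∀ s, (∀ b, 0 ≤ π i h s b) ∧ ∑ b, π i h s b = 1

/-- `πi` is a Markov policy for the single agent `i`. -/
def IsPolicyI (H : ℕ) {i : Fin m} (πi : ℕ → S → A i → ℝ) : Prop :=
  ∀ h ∈ Finset.Icc 1 H, ∀ s, (∀ b, 0 ≤ πi h s b) ∧ ∑ b, πi h s b = 1

/-- The mean rewards all lie in `[0,1]`. -/
def IsReward (H : ℕ) (R : Fin m → ℕ → S → (∀ i, A i) → ℝ) : Prop :=
  ∀ i, ∀ h ∈ Finset.Icc 1 H, ∀ s a, R i h s a ∈ Set.Icc (0 : ℝ) 1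

/-- `d_h(s,a) = m/2 + (1/2) ∑_i 1(a_i = π†_{i,h}(s))` of the `d`-portion attack. -/
noncomputable def dfun (τ : ∀ i : Fin m, ℕ → S → A i) (h : ℕ) (s : S) (a : ∀ i, A i) : ℝ :=
  (m : ℝ) / 2 + (∑ i, if a i = τ i h s then (1 : ℝ) else 0) / 2

/-- Post-attack mean rewards of the `d`-portion attack (target `τ`, worse policy `τ'`). -/
noncomputable def Rport (R : Fin m → ℕ → S → (∀ i, A i) → ℝ) (τ τ' : ∀ i : Fin m, ℕ → S → A i)
    (i : Fin m) : ℕ → S → (∀ i, A i) → ℝ :=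
  fun h s a => (dfun τ h s a / m) * R i h s (tgtJ τ h s)
    + (1 - dfun τ h s a / m) * R i h s (tgtJ τ' h s)

/-- Post-attack transition probabilities of the `d`-portion attack. -/
noncomputable def Pport (P : ℕ → S → (∀ i, A i) → S → ℝ) (τ τ' : ∀ i : Fin m, ℕ → S → A i) :
    ℕ → S → (∀ i, A i) → S → ℝ :=
  fun h s a s' => (dfun τ h s a / m) * P h s (tgtJ τ h s) s'
    + (1 - dfun τ h s a / m) * P h s (tgtJ τ' h s) s'

/-- `Δ^{†−}_{i,h}(s) = Q^{π†}_{i,h}(s, π†_h(s)) − Q^{π†}_{i,h}(s, π⁻_h(s))` (original game). -/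
noncomputable def Δdag (P : ℕ → S → (∀ i, A i) → S → ℝ) (R : Fin m → ℕ → S → (∀ i, A i) → ℝ)
    (τ τ' : ∀ i : Fin m, ℕ → S → A i) (H : ℕ) (i : Fin m) (h : ℕ) (s : S) : ℝ :=
  Qf P (R i) (jp (detP τ)) H h s (tgtJ τ h s) - Qf P (R i) (jp (detP τ)) H h s (tgtJ τ' h s)

/-- Post-attack mean rewards of the `η`-gap attack; `ΔR i` is the reward spread of agent `i`. -/
noncomputable def Rgap (R : Fin m → ℕ → S → (∀ i, A i) → ℝ) (τ : ∀ i : Fin m, ℕ → S → A i)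
    (η : ℝ) (ΔR : Fin m → ℝ) (H : ℕ) (i : Fin m) : ℕ → S → (∀ i, A i) → ℝ :=
  fun h s a =>
    if a = tgtJ τ h s then R i h s a
    else R i h s (tgtJ τ h s) - (η + ((H - h : ℕ) : ℝ) * ΔR i) * (if a i = τ i h s then 0 else 1)

/-- Post-attack mean rewards of the mixed attack. -/
noncomputable def Rmix (R : Fin m → ℕ → S → (∀ i, A i) → ℝ) (τ : ∀ i : Fin m, ℕ → S → A i)
    (i : Fin m) : ℕ → S → (∀ i, A i) → ℝ :=
  fun h s a => (if a i = τ i h s then (1 : ℝ) else 0) * R i h s (tgtJ τ h s)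

/-- Post-attack transition probabilities of the mixed attack. -/
def Pmix (P : ℕ → S → (∀ i, A i) → S → ℝ) (τ : ∀ i : Fin m, ℕ → S → A i) :
    ℕ → S → (∀ i, A i) → S → ℝ :=
  fun h s a s' => P h s (tgtJ τ h s) s'

/-- Probability of being in state `s'` after `n` steps, starting from `(h, s)` and following
the deterministic policy `τ` under the transitions `P`. -/
noncomputable def reach (P : ℕ → S → (∀ i, A i) → S → ℝ) (τ : ∀ i : Fin m, ℕ → S → A i) :
    ℕ → ℕ → S → S → ℝ
  | 0, _, s, s' => if s' = s then 1 else 0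
  | n + 1, h, s, s' => ∑ t, P h s (tgtJ τ h s) t * reach P τ n (h + 1) t s'

/-- Expected sum of a state-dependent function along the Markov chain `Ps`. -/
noncomputable def SSum (Ps : ℕ → S → S → ℝ) (f : ℕ → S → ℝ) : ℕ → ℕ → S → ℝ
  | 0, _, _ => 0
  | n + 1, h, s => f h s + ∑ s', Ps h s s' * SSum Ps f n (h + 1) s'

end MGAttack

namespace MGAttack

section Helpers

variable {S : Type} [Fintype S] [DecidableEq S]
variable {m : ℕ} {A : Fin m → Type} [∀ i, Fintype (A i)] [∀ i, DecidableEq (A i)]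

lemma jp_detP (τ : ∀ i : Fin m, ℕ → S → A i) (h : ℕ) (s : S) (a : ∀ i, A i) :
    jp (detP τ) h s a = if a = tgtJ τ h s then (1 : ℝ) else 0 := by
  unfold jp detP tgtJ
  by_cases hc : a = fun i => τ i h s
  · simp [hc]
  · rw [if_neg hc]
    obtain ⟨j, hj⟩ : ∃ j, a j ≠ τ j h s := by
      by_contra hx; push_neg at hx; exact hc (funext hx)
    exact Finset.prod_eq_zero (Finset.mem_univ j) (by simp [hj])

lemma sum_jp_detP (τ : ∀ i : Fin m, ℕ → S → A i) (h : ℕ) (s : S) (X : (∀ i, A i) → ℝ) :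
    ∑ a, jp (detP τ) h s a * X a = X (tgtJ τ h s) := by
  simp only [jp_detP, ite_mul, one_mul, zero_mul]
  rw [Finset.sum_ite_eq' Finset.univ (tgtJ τ h s) X, if_pos (Finset.mem_univ _)]

lemma dfun_tgt (τ : ∀ i : Fin m, ℕ → S → A i) (h : ℕ) (s : S) :
    dfun τ h s (tgtJ τ h s) = m := by
  simp [dfun, tgtJ]

lemma sum_dev_eq (τ : ∀ i : Fin m, ℕ → S → A i) (h : ℕ) (s : S) (a : ∀ i, A i) :
    (∑ j : Fin m, (if a j = τ j h s then (0:ℝ) else 1))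
      = m - ∑ j : Fin m, (if a j = τ j h s then (1:ℝ) else 0) := by
  rw [eq_sub_iff_add_eq, ← Finset.sum_add_distrib]
  have : ∀ j : Fin m, ((if a j = τ j h s then (0:ℝ) else 1)
      + (if a j = τ j h s then (1:ℝ) else 0)) = 1 := by
    intro j; by_cases hc : a j = τ j h s <;> simp [hc]
  simp [this]

lemma VA_port_det (hm : m ≠ 0) (P : ℕ → S → (∀ i, A i) → S → ℝ)
    (R : Fin m → ℕ → S → (∀ i, A i) → ℝ) (τ τ' : ∀ i : Fin m, ℕ → S → A i) (i : Fin m) :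
    ∀ n h s, VA (Pport P τ τ') (Rport R τ τ' i) (jp (detP τ)) n h s
      = VA P (R i) (jp (detP τ)) n h s := by
  intro n
  induction n with
  | zero => intro h s; rfl
  | succ n ih =>
    intro h s
    have hm' : (m : ℝ) ≠ 0 := Nat.cast_ne_zero.mpr hm
    simp only [VA]
    rw [sum_jp_detP, sum_jp_detP]
    have hR : Rport R τ τ' i h s (tgtJ τ h s) = R i h s (tgtJ τ h s) := by
      simp [Rport, dfun_tgt, div_self hm']
    have hP : ∀ s', Pport P τ τ' h s (tgtJ τ h s) s' = P h s (tgtJ τ h s) s' := by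
      intro s'; simp [Pport, dfun_tgt, div_self hm']
    rw [hR]
    congr 1
    exact Finset.sum_congr rfl fun s' _ => by rw [hP, ih]

lemma key_step (hm : m ≠ 0) (P : ℕ → S → (∀ i, A i) → S → ℝ)
    (R : Fin m → ℕ → S → (∀ i, A i) → ℝ) (τ τ' : ∀ i : Fin m, ℕ → S → A i) (i : Fin m)
    (H n h : ℕ) (hn : H - h = n) (s : S) (a : ∀ i, A i) :
    VA P (R i) (jp (detP τ)) (n + 1) h s
      - (Rport R τ τ' i h s a
          + ∑ s', Pport P τ τ' h s a s' * VA P (R i) (jp (detP τ)) n (h + 1) s')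
      = (Δdag P R τ τ' H i h s / (2 * m))
          * ∑ j : Fin m, (if a j = τ j h s then (0 : ℝ) else 1) := by
  have hm' : (m : ℝ) ≠ 0 := Nat.cast_ne_zero.mpr hm
  have hnd : (∑ j : Fin m, (if a j = τ j h s then (0:ℝ) else 1))
      = (1 - dfun τ h s a / m) * (2 * m) := by
    rw [sum_dev_eq τ h s a, dfun]
    field_simp
    ring
  have hΔ : Δdag P R τ τ' H i h s
      = (R i h s (tgtJ τ h s)
          + ∑ s', P h s (tgtJ τ h s) s' * VA P (R i) (jp (detP τ)) n (h + 1) s')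
        - (R i h s (tgtJ τ' h s)
          + ∑ s', P h s (tgtJ τ' h s) s' * VA P (R i) (jp (detP τ)) n (h + 1) s') := by
    simp only [Δdag, Qf, hn]
  have hVA : VA P (R i) (jp (detP τ)) (n + 1) h s
      = R i h s (tgtJ τ h s)
        + ∑ s', P h s (tgtJ τ h s) s' * VA P (R i) (jp (detP τ)) n (h + 1) s' := by
    show (∑ a, jp (detP τ) h s a
        * (R i h s a + ∑ s', P h s a s' * VA P (R i) (jp (detP τ)) n (h + 1) s')) = _
    rw [sum_jp_detP]
  have hPp : (∑ s', Pport P τ τ' h s a s' * VA P (R i) (jp (detP τ)) n (h + 1) s')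
      = (dfun τ h s a / m)
          * (∑ s', P h s (tgtJ τ h s) s' * VA P (R i) (jp (detP τ)) n (h + 1) s')
        + (1 - dfun τ h s a / m)
          * (∑ s', P h s (tgtJ τ' h s) s' * VA P (R i) (jp (detP τ)) n (h + 1) s') := by
    simp only [Pport, Finset.mul_sum, ← Finset.sum_add_distrib]
    exact Finset.sum_congr rfl fun s' _ => by ring
  rw [hVA, hPp, hΔ, hnd]
  simp only [Rport]
  field_simp
  ring

lemma sum_jp_eq_one {H : ℕ} (π : ∀ j : Fin m, ℕ → S → A j → ℝ) (hπ : IsPolicy H π)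
    (h : ℕ) (hh : h ∈ Finset.Icc 1 H) (s : S) :
    ∑ a, jp π h s a = 1 := by
  unfold jp
  rw [← Fintype.piFinset_univ, ← Finset.prod_univ_sum]
  exact Finset.prod_eq_one fun j _ => (hπ j h hh s).2

lemma main_ind (hm : m ≠ 0) (H : ℕ) (P : ℕ → S → (∀ i, A i) → S → ℝ)
    (R : Fin m → ℕ → S → (∀ i, A i) → ℝ) (τ τ' : ∀ i : Fin m, ℕ → S → A i)
    (π : ∀ j : Fin m, ℕ → S → A j → ℝ) (hπ : IsPolicy H π) (i : Fin m) :
    ∀ n h, h + n = H + 1 → 1 ≤ h → ∀ s,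
      VA (Pport P τ τ') (Rport R τ τ' i) (jp (detP τ)) n h s
        - VA (Pport P τ τ') (Rport R τ τ' i) (jp π) n h s
      = VA (Pport P τ τ')
          (fun h' s' a => (Δdag P R τ τ' H i h' s' / (2 * m))
            * ∑ j : Fin m, (if a j = τ j h' s' then (0 : ℝ) else 1))
          (jp π) n h s := by
  intro n
  induction n with
  | zero => intro h _ _ s; simp [VA]
  | succ n ih =>
    intro h hhn hh1 s
    have hhH : h ∈ Finset.Icc 1 H := Finset.mem_Icc.mpr ⟨hh1, by omega⟩
    have hone : ∑ a, jp π h s a = 1 := sum_jp_eq_one π hπ h hhH s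
    have hHn : H - h = n := by omega
    set g : ℕ → S → (∀ i, A i) → ℝ := fun h' s' a => (Δdag P R τ τ' H i h' s' / (2 * m))
        * ∑ j : Fin m, (if a j = τ j h' s' then (0 : ℝ) else 1) with hg
    have key : ∀ a, VA P (R i) (jp (detP τ)) (n + 1) h s
        - (Rport R τ τ' i h s a + ∑ s', Pport P τ τ' h s a s'
            * VA (Pport P τ τ') (Rport R τ τ' i) (jp π) n (h + 1) s')
        = g h s a
          + ∑ s', Pport P τ τ' h s a s' * VA (Pport P τ τ') g (jp π) n (h + 1) s' := by
      intro a
      have h2 : ∀ s', VA (Pport P τ τ') g (jp π) n (h + 1) s'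
          = VA P (R i) (jp (detP τ)) n (h + 1) s'
            - VA (Pport P τ τ') (Rport R τ τ' i) (jp π) n (h + 1) s' := by
        intro s'
        rw [← VA_port_det hm P R τ τ' i n (h + 1) s']
        exact (ih (h + 1) (by omega) (by omega) s').symm
      have h3 : (∑ s', Pport P τ τ' h s a s' * VA (Pport P τ τ') g (jp π) n (h + 1) s')
          = (∑ s', Pport P τ τ' h s a s' * VA P (R i) (jp (detP τ)) n (h + 1) s')
            - ∑ s', Pport P τ τ' h s a s'
              * VA (Pport P τ τ') (Rport R τ τ' i) (jp π) n (h + 1) s' := by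
        rw [← Finset.sum_sub_distrib]
        exact Finset.sum_congr rfl fun s' _ => by rw [h2]; ring
      rw [h3]
      have h4 := key_step hm P R τ τ' i H n h hHn s a
      rw [hg]
      linarith [h4]
    have hD : VA P (R i) (jp (detP τ)) (n + 1) h s
        = ∑ a, jp π h s a * VA P (R i) (jp (detP τ)) (n + 1) h s := by
      rw [← Finset.sum_mul, hone, one_mul]
    have lhs_eq : VA (Pport P τ τ') (Rport R τ τ' i) (jp π) (n + 1) h s
        = ∑ a, jp π h s a * (Rport R τ τ' i h s a + ∑ s', Pport P τ τ' h s a s'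
            * VA (Pport P τ τ') (Rport R τ τ' i) (jp π) n (h + 1) s') := rfl
    have rhs_eq : VA (Pport P τ τ') g (jp π) (n + 1) h s
        = ∑ a, jp π h s a * (g h s a + ∑ s', Pport P τ τ' h s a s'
            * VA (Pport P τ τ') g (jp π) n (h + 1) s') := rfl
    rw [VA_port_det hm P R τ τ' i (n + 1) h s, hD, lhs_eq, rhs_eq,
      ← Finset.sum_sub_distrib]
    refine Finset.sum_congr rfl fun a _ => ?_
    rw [← mul_sub, key a]

end Helpers

/-- Under the `d`-portion attack, for any Markov product policy `π` the post-attack value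
gap between the target policy `π†` and `π` equals the expected, over post-attack
trajectories of `π`, cumulative sum of `Δ^{†−}_{i,h'}(s_{h'})/(2m)` times the number of
agents deviating from the target action. -/
theorem stmt6 {S : Type} [Fintype S] [DecidableEq S]
    {m : ℕ} {A : Fin m → Type} [∀ i, Fintype (A i)] [∀ i, DecidableEq (A i)]
    (H : ℕ) (hH : 1 ≤ H) (hm : 1 ≤ m)
    (P : ℕ → S → (∀ i, A i) → S → ℝ) (hP : IsKernel H P)
    (R : Fin m → ℕ → S → (∀ i, A i) → ℝ) (hR : IsReward H R)
    (τ τ' : ∀ i : Fin m, ℕ → S → A i)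
    (π : ∀ j : Fin m, ℕ → S → A j → ℝ) (hπ : IsPolicy H π)
    (i : Fin m) (h : ℕ) (hh : h ∈ Finset.Icc 1 H) (s : S) :
    Vf (Pport P τ τ') (Rport R τ τ' i) (jp (detP τ)) H h s
        - Vf (Pport P τ τ') (Rport R τ τ' i) (jp π) H h s
      = VA (Pport P τ τ')
          (fun h' s' a => (Δdag P R τ τ' H i h' s' / (2 * m))
            * ∑ j : Fin m, (if a j = τ j h' s' then (0 : ℝ) else 1))
          (jp π) (H + 1 - h) h s := by
  obtain ⟨h1, h2⟩ := Finset.mem_Icc.mp hh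
  have hm0 : m ≠ 0 := by omega
  unfold Vf
  exact main_ind hm0 H P R τ τ' π hπ i (H + 1 - h) h (by omega) h1 s

end MGAttack
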